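/- arXiv:2007.04714 — 3 statements merged into one kernel-verified Lean document; each statement's English description precedes it below -/
import Mathlib

section
/- Symmetry of the two-variable one-column factorial generating function (vertical-strip lemma used in the proof of Proposition 4.3(iii)): for every m ≥ 0, every commutative ring A, all u, v ∈ A and every doubly infinite family a = (a_t)_{t∈ℤ} in A, the sum Σ_{p=0}^{m} ( ∏_{i=1}^{p} (u − a_{1−i}) ) · ( ∏_{i=p+1}^{m} (v − a_{−i}) ) is symmetric in u and v, i.e. it is unchanged when u and v are interchanged. -/
/-!
With `c k = a (-k)` the sum is `S(u, v) = ∑_{p ≤ m} ∏_{k < p} (u - c k) * ∏_{p < k ≤ m} (v - c k)`.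
Since `(u - c p) - (v - c p) = u - v`, multiplying by `u - v` telescopes:
`(u - v) * S(u, v) = ∏_{k ≤ m} (u - c k) - ∏_{k ≤ m} (v - c k)`.
Passing from `m` to `m + 1` gives `S_{m+1}(u, v) = S_m(u, v) * (v - c (m+1)) + ∏_{k ≤ m} (u - c k)`,
so `S_{m+1}(u, v) - S_{m+1}(v, u)` is, by induction on `m`, `-(u - v) * S_m(u, v)` plus the
difference of the two full products, which vanishes by the telescoping identity. This avoids
cancelling `u - v`, which need not be a non-zero-divisor in `A`.
-/

open Finset

section

variable {A : Type*} [CommRing A]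

def stripSum (m : ℕ) (u v : A) (c : ℕ → A) : A :=
  ∑ p ∈ range (m + 1), (∏ k ∈ range p, (u - c k)) * ∏ k ∈ Ioc p m, (v - c k)

theorem stripSum_zero (u v : A) (c : ℕ → A) : stripSum 0 u v c = 1 := by
  simp [stripSum]

theorem stripSum_succ (m : ℕ) (u v : A) (c : ℕ → A) :
    stripSum (m + 1) u v c = stripSum m u v c * (v - c (m + 1)) + ∏ k ∈ range (m + 1), (u - c k) := by
  rw [stripSum, sum_range_succ, Ioc_self, prod_empty, mul_one, stripSum, sum_mul]
  congr 1
  refine sum_congr rfl fun p hp => ?_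
  rw [prod_Ioc_succ_top (Nat.lt_succ_iff.mp (mem_range.mp hp)), mul_assoc]

theorem sub_mul_stripSum (m : ℕ) (u v : A) (c : ℕ → A) :
    (u - v) * stripSum m u v c = ∏ k ∈ range (m + 1), (u - c k) - ∏ k ∈ range (m + 1), (v - c k) := by
  induction m with
  | zero => simp [stripSum_zero]
  | succ m ih =>
    rw [stripSum_succ, prod_range_succ _ (m + 1), prod_range_succ (fun k => v - c k) (m + 1)]
    linear_combination (v - c (m + 1)) * ih

theorem stripSum_comm (m : ℕ) (u v : A) (c : ℕ → A) : stripSum m u v c = stripSum m v u c := by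
  induction m with
  | zero => simp [stripSum_zero]
  | succ m ih =>
    rw [stripSum_succ, stripSum_succ]
    linear_combination (u - c (m + 1)) * ih - sub_mul_stripSum m u v c

end

theorem prod_Icc_one_eq_prod_range {M : Type*} [CommMonoid M] (f : ℕ → M) (p : ℕ) :
    ∏ i ∈ Icc 1 p, f i = ∏ k ∈ range p, f (k + 1) := by
  rw [range_eq_Ico, prod_Ico_add', zero_add, Ico_add_one_right_eq_Icc]

/-- **Vertical-strip lemma** (symmetry of the two-variable one-column factorial
generating function, used in the proof of Proposition 4.3(iii)): for every `m ≥ 0`,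
every commutative ring `A`, all `u, v ∈ A` and every doubly infinite family
`a = (a_t)_{t∈ℤ}` in `A`, the sum
`Σ_{p=0}^{m} (∏_{i=1}^{p} (u − a_{1−i})) · (∏_{i=p+1}^{m} (v − a_{−i}))`
is unchanged when `u` and `v` are interchanged. -/
theorem vertical_strip_symmetric {A : Type*} [CommRing A] (m : ℕ) (u v : A) (a : ℤ → A) :
    ∑ p ∈ Finset.range (m + 1),
        (∏ i ∈ Finset.Icc 1 p, (u - a (1 - (i : ℤ)))) *
          ∏ i ∈ Finset.Icc (p + 1) m, (v - a (-(i : ℤ))) =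
      ∑ p ∈ Finset.range (m + 1),
        (∏ i ∈ Finset.Icc 1 p, (v - a (1 - (i : ℤ)))) *
          ∏ i ∈ Finset.Icc (p + 1) m, (u - a (-(i : ℤ))) := by
  have as_stripSum : ∀ w z : A,
      ∑ p ∈ range (m + 1), (∏ i ∈ Icc 1 p, (w - a (1 - (i : ℤ)))) *
          ∏ i ∈ Icc (p + 1) m, (z - a (-(i : ℤ))) = stripSum m w z (fun k => a (-(k : ℤ))) := by
    intro w z
    simp only [stripSum, prod_Icc_one_eq_prod_range, Icc_add_one_left_eq_Ioc, Nat.cast_add,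
      Nat.cast_one, sub_add_cancel_right]
  rw [as_stripSum, as_stripSum, stripSum_comm]
end

section
/- Two-filling enumeration for ribbons: let θ be a nonempty ribbon, i.e. a nonempty edgewise-connected skew Young diagram containing no 2×2 block of boxes, and let R′ be a marked alphabet on R = {1,2} with exactly one unprimed letter and one primed letter (in either order, so that either 1 is unprimed and 2 is primed, or 1 is primed and 2 is unprimed). Then the set 𝒯^{θ}_{R′} of skew supertableaux of shape θ over R′ has exactly two elements. -/
namespace SuperSchur

variable {A : Type*} [CommRing A]

/-- The content of a box `(i, j)` (rows and columns indexed from 0;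
row `i` occupies columns `μ_i ≤ j < λ_i`, so the content is `j - i`). -/
def content (p : ℕ × ℕ) : ℤ := (p.2 : ℤ) - (p.1 : ℤ)

/-- The cells of the skew Young diagram `F^{λ/μ}` (0-indexed rows and columns). -/
def cells (lam mu : List ℕ) : Finset (ℕ × ℕ) :=
  (Finset.range lam.length).biUnion fun i =>
    (Finset.Ico (mu.getD i 0) (lam.getD i 0)).image fun j => (i, j)

/-- `l` is a partition: a weakly decreasing list of positive integers. -/
def IsPartition (l : List ℕ) : Prop := l.Pairwise (· ≥ ·) ∧ ∀ x ∈ l, 0 < x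

/-- `μ ⊆ λ`. -/
def Contained (mu lam : List ℕ) : Prop := ∀ i, mu.getD i 0 ≤ lam.getD i 0

/-- `T` is a skew supertableau on the cell set `C` over the marked alphabet `Fin NA`
(letters in their natural order), where `prm r = true` means the letter `r` is primed:
entries weakly increase along rows and down columns, no two equal unprimed entries lie
in the same column, and no two equal primed entries lie in the same row. -/
def IsSuperTab {NA : ℕ} (C : Finset (ℕ × ℕ)) (prm : Fin NA → Bool)
    (T : {p // p ∈ C} → Fin NA) : Prop :=
  (∀ u v : {p // p ∈ C}, u.1.1 = v.1.1 → u.1.2 ≤ v.1.2 → T u ≤ T v) ∧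
  (∀ u v : {p // p ∈ C}, u.1.2 = v.1.2 → u.1.1 ≤ v.1.1 → T u ≤ T v) ∧
  (∀ u v : {p // p ∈ C}, u.1.2 = v.1.2 → u.1.1 ≠ v.1.1 → prm (T u) = false → T u ≠ T v) ∧
  (∀ u v : {p // p ∈ C}, u.1.1 = v.1.1 → u.1.2 ≠ v.1.2 → prm (T u) = true → T u ≠ T v)

open Classical in
/-- Generic weighted sum over all skew supertableaux on `C`: the weight of the letter `r`
placed in a box of content `c` is `w r c`. -/
noncomputable def tabSum {NA : ℕ} (C : Finset (ℕ × ℕ)) (prm : Fin NA → Bool)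
    (w : Fin NA → ℤ → A) : A :=
  ∑ T ∈ Finset.univ.filter (fun T : {p // p ∈ C} → Fin NA => IsSuperTab C prm T),
    ∏ u : {p // p ∈ C}, w (T u) (content u.1)

/-- The (1-based) index of the letter `r` among the letters with the same marking:
if `r` is the k-th smallest unprimed letter then `idx prm r = k`, and similarly
for primed letters. -/
def idx {NA : ℕ} (prm : Fin NA → Bool) (r : Fin NA) : ℕ :=
  (Finset.univ.filter fun r' => prm r' = prm r ∧ r' ≤ r).card

/-- `σ(r) = #{i ∈ M : i ≤ r} - #{j ∈ N : j ≤ r}`, plus `1` if `r` is primed. -/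
def sigma {NA : ℕ} (prm : Fin NA → Bool) (r : Fin NA) : ℤ :=
  ((Finset.univ.filter fun r' : Fin NA => prm r' = false ∧ r' ≤ r).card : ℤ)
    - ((Finset.univ.filter fun r' : Fin NA => prm r' = true ∧ r' ≤ r).card : ℤ)
    + (if prm r then 1 else 0)

/-- Ninth-variation weights: the k-th unprimed letter in a box of content `c`
carries weight `X k c`, and the ℓ-th primed letter carries `Y ℓ c`. -/
def wNinth {m n NA : ℕ} (prm : Fin NA → Bool) (X : Fin m → ℤ → A) (Y : Fin n → ℤ → A) :
    Fin NA → ℤ → A := fun r c =>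
  if prm r then (if h : idx prm r - 1 < n then Y ⟨idx prm r - 1, h⟩ c else 0)
  else (if h : idx prm r - 1 < m then X ⟨idx prm r - 1, h⟩ c else 0)

/-- Factorial supersymmetric weights: the k-th unprimed letter `r` in a box of content `c`
carries weight `x k + a (σ(r) + c)`, and the ℓ-th primed letter `r` carries
`y ℓ - a (σ(r) + c)`. -/
def wFact {m n NA : ℕ} (prm : Fin NA → Bool) (x : Fin m → A) (y : Fin n → A) (a : ℤ → A) :
    Fin NA → ℤ → A := fun r c =>
  if prm r then
    (if h : idx prm r - 1 < n then y ⟨idx prm r - 1, h⟩ else 0) - a (sigma prm r + c)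
  else
    (if h : idx prm r - 1 < m then x ⟨idx prm r - 1, h⟩ else 0) + a (sigma prm r + c)

/-- The marked alphabet `1 < 2 < ⋯ < m < 1′ < 2′ < ⋯ < n′`. -/
def prmFirst (m n : ℕ) : Fin (m + n) → Bool := fun r => decide (m ≤ (r : ℕ))

/-- The classical (first variation) supersymmetric skew Schur function `s_{λ/μ}(x,y)`. -/
noncomputable def superSchur (lam mu : List ℕ) {m n : ℕ} (x : Fin m → A) (y : Fin n → A) : A :=
  tabSum (cells lam mu) (prmFirst m n) (wNinth (prmFirst m n) (fun k _ => x k) (fun l _ => y l))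

/-- The row (counted from the top, 0-based) of the box of content `c` in the canonical
realisation of the segment of the cutting strip ending at content `d`:
the number of vertical steps strictly between `c` and `d`. -/
noncomputable def ribRow (dir : ℤ → Bool) (d c : ℤ) : ℕ :=
  ((Finset.Ioc c d).filter fun c' => dir c' = true).card

/-- The shift `m(p,q)`: the content (within the cutting strip) of the box of the ribbon
`φ_{ad}` that lies on the main diagonal of the skew diagram whose outer rim is `φ_{ad}`. -/
noncomputable def mShift (dir : ℤ → Bool) (a d : ℤ) : ℤ := a + (ribRow dir d a : ℤ)

/-- The ribbon `φ_{ad}` of the cutting strip, realised canonically as a skew diagram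
in its own right (its box of cutting-strip content `c` gets standard content
`c - mShift dir a d`). -/
noncomputable def ribbonCells (dir : ℤ → Bool) (a d : ℤ) : Finset (ℕ × ℕ) :=
  (Finset.Icc a d).image fun c =>
    (ribRow dir d c, (c + (ribRow dir d c : ℤ) - mShift dir a d).toNat)

/-- The cell set `S` coincides in shape and contents with the segment `φ_{ab}` of the
cutting strip described by `dir` (where `dir c = true` iff the box of content `c - 1`
lies below the box of content `c`, and `dir c = false` iff it lies to its left). -/
def StripMatches (dir : ℤ → Bool) (a b : ℤ) (S : Finset (ℕ × ℕ)) : Prop :=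
  (∀ c : ℤ, (a ≤ c ∧ c ≤ b) ↔ ∃ u ∈ S, content u = c) ∧
  (∀ u ∈ S, ∀ v ∈ S, content u = content v → u = v) ∧
  (∀ u ∈ S, ∀ v ∈ S, content v = content u + 1 →
    if dir (content v) then v.1 + 1 = u.1 ∧ v.2 = u.2 else v.1 = u.1 ∧ u.2 + 1 = v.2)

/-- `(dir, ab, θ)` is an outside decomposition of `F^{λ/μ}`: the strips `θ p` are
pairwise disjoint with union the whole diagram, each `θ p` coincides in shape
and contents with the segment `φ_{(ab p).1, (ab p).2}` of the common cutting strip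
described by `dir`, the starting box of each strip lies on the left or bottom boundary,
the ending box of each strip lies on the right or top boundary, and the cutting strip
contains a box of every relevant content occurring in the diagram. -/
def OutsideDecomp (lam mu : List ℕ) {s : ℕ} (dir : ℤ → Bool)
    (ab : Fin s → ℤ × ℤ) (θ : Fin s → Finset (ℕ × ℕ)) : Prop :=
  (∀ p q : Fin s, p ≠ q → Disjoint (θ p) (θ q)) ∧
  (Finset.univ.biUnion θ = cells lam mu) ∧
  (∀ p : Fin s, StripMatches dir (ab p).1 (ab p).2 (θ p)) ∧
  (∀ p : Fin s, ∀ u ∈ θ p, content u = (ab p).1 →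
    u.2 = 0 ∨ (u.1, u.2 - 1) ∉ cells lam mu ∨ (u.1 + 1, u.2) ∉ cells lam mu) ∧
  (∀ p : Fin s, ∀ u ∈ θ p, content u = (ab p).2 →
    (u.1, u.2 + 1) ∉ cells lam mu ∨ u.1 = 0 ∨ (u.1 - 1, u.2) ∉ cells lam mu) ∧
  (∀ p q : Fin s, ∀ c : ℤ, (ab p).1 ≤ c → c ≤ (ab q).2 → ∃ u ∈ cells lam mu, content u = c)

/-- Two boxes are edgewise adjacent. -/
def CellAdj (u v : ℕ × ℕ) : Prop :=
  (u.1 = v.1 ∧ (u.2 + 1 = v.2 ∨ v.2 + 1 = u.2)) ∨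
  (u.2 = v.2 ∧ (u.1 + 1 = v.1 ∨ v.1 + 1 = u.1))

/-- `C` is edgewise connected. -/
def ConnectedCells (C : Finset (ℕ × ℕ)) : Prop :=
  ∀ u ∈ C, ∀ v ∈ C,
    Relation.ReflTransGen (fun p q => p ∈ C ∧ q ∈ C ∧ CellAdj p q) u v

/-- `C` contains no 2×2 block of boxes. -/
def NoTwoByTwo (C : Finset (ℕ × ℕ)) : Prop :=
  ∀ i j : ℕ, ¬((i, j) ∈ C ∧ (i + 1, j) ∈ C ∧ (i, j + 1) ∈ C ∧ (i + 1, j + 1) ∈ C)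

/-- `C` is a ribbon: nonempty, edgewise connected, with no 2×2 block of boxes. -/
def IsRibbon (C : Finset (ℕ × ℕ)) : Prop :=
  C.Nonempty ∧ ConnectedCells C ∧ NoTwoByTwo C

/-- `T` is an ordered Young tableau on `C`: entries weakly increase along rows and
down columns, and strictly increase down diagonals. -/
def IsOYT {nL : ℕ} (C : Finset (ℕ × ℕ)) (T : {p // p ∈ C} → Fin nL) : Prop :=
  (∀ u v : {p // p ∈ C}, u.1.1 = v.1.1 → u.1.2 ≤ v.1.2 → T u ≤ T v) ∧
  (∀ u v : {p // p ∈ C}, u.1.2 = v.1.2 → u.1.1 ≤ v.1.1 → T u ≤ T v) ∧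
  (∀ u v : {p // p ∈ C}, u.1.1 + 1 = v.1.1 → u.1.2 + 1 = v.1.2 → T u < T v)

/-- The number `h(T)` of horizontally adjacent pairs of equal entries. -/
def horizPairs {nL : ℕ} (C : Finset (ℕ × ℕ)) (T : {p // p ∈ C} → Fin nL) : ℕ :=
  (Finset.univ.filter fun uv : {p // p ∈ C} × {p // p ∈ C} =>
    uv.1.1.1 = uv.2.1.1 ∧ uv.1.1.2 + 1 = uv.2.1.2 ∧ T uv.1 = T uv.2).card

/-- The number `v(T)` of vertically adjacent pairs of equal entries. -/
def vertPairs {nL : ℕ} (C : Finset (ℕ × ℕ)) (T : {p // p ∈ C} → Fin nL) : ℕ :=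
  (Finset.univ.filter fun uv : {p // p ∈ C} × {p // p ∈ C} =>
    uv.1.1.2 = uv.2.1.2 ∧ uv.1.1.1 + 1 = uv.2.1.1 ∧ T uv.1 = T uv.2).card

open Classical in
/-- Bachmann's ordered-Young-tableau Schur function of the cell set `C`. -/
noncomputable def bacSum (C : Finset (ℕ × ℕ)) {nL : ℕ} (F : Fin nL → ℤ → A) (t : A) : A :=
  ∑ T ∈ Finset.univ.filter (fun T : {p // p ∈ C} → Fin nL => IsOYT C T),
    t ^ vertPairs C T * (1 - t) ^ horizPairs C T *
      ∏ u : {p // p ∈ C}, F (T u) (content u.1)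

/-- Molev's factorial supersymmetric weights on the alphabet
`n′ < ⋯ < 2′ < 1′ < 1 < 2 < ⋯ < m` (position `p < n` is the letter `(n-p)′`,
position `n + k - 1` is the letter `k`): the letter `k` in a box of content `c`
carries weight `x k + a (k + c)` and the letter `ℓ′` carries `y ℓ - a (ℓ + c)`. -/
def wMol {m n : ℕ} (x : Fin m → A) (y : Fin n → A) (a : ℤ → A) : Fin (m + n) → ℤ → A :=
  fun r c =>
    if h : (r : ℕ) < n then
      y ⟨n - 1 - (r : ℕ), by omega⟩ - a (((n : ℤ) - ((r : ℕ) : ℤ)) + c)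
    else
      x ⟨(r : ℕ) - n, by have := r.isLt; omega⟩ + a ((((r : ℕ) : ℤ) - (n : ℤ) + 1) + c)

/-!
In a ribbon no box lies strictly south-east of another one, so distinct boxes have distinct
contents and the box of content `c + 1` sits directly right of or directly above the box of
content `c`. If the smaller letter is unprimed and the larger one primed, every box with a box
above it in its column must hold the larger letter and every box with a box to its right in its
row must hold the smaller one; no box is subject to both constraints, and exactly one box, the
box of maximal content, is subject to neither. A supertableau is therefore determined by its
entry there, and both entries occur. When the smaller letter is primed, rows and columns
exchange roles and the free box is the one of minimal content.
-/

def RowLT (u v : ℕ × ℕ) : Prop := u.1 = v.1 ∧ u.2 < v.2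

def ColLT (u v : ℕ × ℕ) : Prop := u.2 = v.2 ∧ u.1 < v.1

theorem mem_cells {lam mu : List ℕ} {i j : ℕ} :
    (i, j) ∈ cells lam mu ↔ i < lam.length ∧ mu.getD i 0 ≤ j ∧ j < lam.getD i 0 := by
  simp [cells]

theorem antitone_getD_of_pairwise_ge {l : List ℕ} (h : l.Pairwise (· ≥ ·)) :
    Antitone (l.getD · 0) := by
  intro a b hab
  rcases lt_or_ge b l.length with hb | hb
  · rcases hab.eq_or_lt with rfl | hab
    · rfl
    · simp only [List.getD_eq_getElem _ _ hb, List.getD_eq_getElem _ _ (hab.trans hb)]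
      exact List.pairwise_iff_getElem.mp h a b (hab.trans hb) hb hab
  · simp only [List.getD_eq_default _ _ hb, zero_le]

theorem ordConnected_cells {lam mu : List ℕ} (hlam : lam.Pairwise (· ≥ ·))
    (hmu : mu.Pairwise (· ≥ ·)) : (cells lam mu : Set (ℕ × ℕ)).OrdConnected := by
  refine ⟨fun ⟨i, j⟩ hu ⟨i', j'⟩ hv ⟨i'', j''⟩ ⟨⟨hi, hj⟩, ⟨hi', hj'⟩⟩ => ?_⟩
  simp only [Finset.mem_coe, mem_cells] at hu hv ⊢
  have hmu' : mu.getD i'' 0 ≤ mu.getD i 0 := antitone_getD_of_pairwise_ge hmu hi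
  have hlam' : lam.getD i' 0 ≤ lam.getD i'' 0 := antitone_getD_of_pairwise_ge hlam hi'
  omega

section Ribbon

variable {C : Finset (ℕ × ℕ)} {u v w b : ℕ × ℕ}

theorem snd_le_snd_of_fst_lt (hC : (C : Set (ℕ × ℕ)).OrdConnected) (h2 : NoTwoByTwo C)
    (hu : u ∈ C) (hv : v ∈ C) (h : u.1 < v.1) : v.2 ≤ u.2 := by
  obtain ⟨i, j⟩ := u
  by_contra! h'
  have hsub : Set.Icc (i, j) v ⊆ C := hC.out hu hv
  refine h2 i j ⟨hu, hsub ?_, hsub ?_, hsub ?_⟩ <;>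
    exact ⟨Prod.mk_le_mk.mpr ⟨by omega, by omega⟩, Prod.mk_le_mk.mpr ⟨by omega, by omega⟩⟩

theorem content_injOn (hC : (C : Set (ℕ × ℕ)).OrdConnected) (h2 : NoTwoByTwo C) :
    Set.InjOn content C := by
  intro u hu v hv h
  have key₁ := fun hlt => snd_le_snd_of_fst_lt hC h2 hu hv hlt
  have key₂ := fun hlt => snd_le_snd_of_fst_lt hC h2 hv hu hlt
  simp only [content] at h
  ext <;> omega

theorem rowLT_or_colLT_of_content_eq_add_one (hC : (C : Set (ℕ × ℕ)).OrdConnected)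
    (h2 : NoTwoByTwo C) (hu : u ∈ C) (hv : v ∈ C) (h : content v = content u + 1) :
    RowLT u v ∨ ColLT v u := by
  have key₁ := fun hlt => snd_le_snd_of_fst_lt hC h2 hu hv hlt
  have key₂ := fun hlt => snd_le_snd_of_fst_lt hC h2 hv hu hlt
  simp only [content] at h
  simp only [RowLT, ColLT]
  omega

theorem not_rowLT_of_colLT (hC : (C : Set (ℕ × ℕ)).OrdConnected) (h2 : NoTwoByTwo C)
    (hw : w ∈ C) (hv : v ∈ C) (hwu : ColLT w u) : ¬RowLT u v := by
  have := snd_le_snd_of_fst_lt hC h2 hw hv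
  simp only [RowLT, ColLT] at hwu ⊢
  omega

theorem not_colLT_of_rowLT (hC : (C : Set (ℕ × ℕ)).OrdConnected) (h2 : NoTwoByTwo C)
    (hw : w ∈ C) (hv : v ∈ C) (hwu : RowLT w u) : ¬ColLT u v := by
  have := snd_le_snd_of_fst_lt hC h2 hw hv
  simp only [RowLT, ColLT] at hwu ⊢
  omega

theorem exists_content_eq (hconn : ConnectedCells C) (hu : u ∈ C) (hv : v ∈ C) {c : ℤ}
    (hcu : content u ≤ c) (hcv : c ≤ content v) : ∃ w ∈ C, content w = c := by
  have hpath := hconn u hu v hv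
  clear hv
  revert hcv
  induction hpath with
  | refl => exact fun hcv => ⟨u, hu, le_antisymm hcu hcv⟩
  | @tail p q _ hpq ih =>
    intro hcq
    obtain ⟨-, hq, hadj⟩ := hpq
    rcases le_or_gt c (content p) with hcp | hcp
    · exact ih hcp
    · refine ⟨q, hq, ?_⟩
      simp only [CellAdj, content] at hadj hcp hcq ⊢
      omega

theorem forall_not_rowLT_and_forall_not_colLT_iff_of_max (hC : (C : Set (ℕ × ℕ)).OrdConnected)
    (h2 : NoTwoByTwo C) (hconn : ConnectedCells C) (hb : b ∈ C)
    (hmax : ∀ w ∈ C, content w ≤ content b) (hu : u ∈ C) :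
    ((∀ v ∈ C, ¬RowLT u v) ∧ ∀ w ∈ C, ¬ColLT w u) ↔ u = b := by
  constructor
  · rintro ⟨hR, hA⟩
    refine content_injOn hC h2 hu hb (le_antisymm (hmax u hu) (not_lt.mp fun hlt => ?_))
    obtain ⟨v, hv, hvu⟩ :=
      exists_content_eq hconn hu hb (lt_add_one _).le (Int.add_one_le_of_lt hlt)
    exact (rowLT_or_colLT_of_content_eq_add_one hC h2 hu hv hvu).elim (hR v hv) (hA v hv)
  · rintro rfl
    refine ⟨fun v hv huv => ?_, fun w hw hwu => ?_⟩
    · have := hmax v hv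
      simp only [RowLT, content] at huv this
      omega
    · have := hmax w hw
      simp only [ColLT, content] at hwu this
      omega

theorem forall_not_colLT_and_forall_not_rowLT_iff_of_min (hC : (C : Set (ℕ × ℕ)).OrdConnected)
    (h2 : NoTwoByTwo C) (hconn : ConnectedCells C) (hb : b ∈ C)
    (hmin : ∀ w ∈ C, content b ≤ content w) (hu : u ∈ C) :
    ((∀ v ∈ C, ¬ColLT u v) ∧ ∀ w ∈ C, ¬RowLT w u) ↔ u = b := by
  constructor
  · rintro ⟨hB, hL⟩
    refine content_injOn hC h2 hu hb (le_antisymm (not_lt.mp fun hlt => ?_) (hmin u hu))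
    obtain ⟨v, hv, hvu⟩ := exists_content_eq hconn hb hu (Int.le_sub_one_of_lt hlt) (by omega)
    exact (rowLT_or_colLT_of_content_eq_add_one hC h2 hv hu (by omega)).elim (hL v hv) (hB v hv)
  · rintro rfl
    refine ⟨fun v hv huv => ?_, fun w hw hwu => ?_⟩
    · have := hmin v hv
      simp only [ColLT, content] at huv this
      omega
    · have := hmin w hw
      simp only [RowLT, content] at hwu this
      omega

end Ribbon

section SuperTableaux

variable {C : Finset (ℕ × ℕ)}

theorem isSuperTab_iff_rowLT_colLT {NA : ℕ} {prm : Fin NA → Bool} {T : {p // p ∈ C} → Fin NA} :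
    IsSuperTab C prm T ↔
      (∀ u v : {p // p ∈ C}, RowLT u.1 v.1 → T u ≤ T v ∧ (prm (T u) = true → T u ≠ T v)) ∧
      ∀ u v : {p // p ∈ C}, ColLT u.1 v.1 → T u ≤ T v ∧ (prm (T u) = false → T u ≠ T v) := by
  constructor
  · rintro ⟨hrow, hcol, hcolStrict, hrowStrict⟩
    exact ⟨fun u v ⟨hr, hlt⟩ => ⟨hrow u v hr hlt.le, hrowStrict u v hr hlt.ne⟩,
      fun u v ⟨hc, hlt⟩ => ⟨hcol u v hc hlt.le, hcolStrict u v hc hlt.ne⟩⟩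
  · rintro ⟨hrow, hcol⟩
    refine ⟨fun u v hr hle => ?_, fun u v hc hle => ?_, fun u v hc hne hp => ?_,
      fun u v hr hne hp => ?_⟩
    · rcases hle.lt_or_eq with hlt | heq
      · exact (hrow u v ⟨hr, hlt⟩).1
      · rw [Subtype.ext (Prod.ext hr heq)]
    · rcases hle.lt_or_eq with hlt | heq
      · exact (hcol u v ⟨hc, hlt⟩).1
      · rw [Subtype.ext (Prod.ext heq hc)]
    · rcases hne.lt_or_gt with hlt | hlt
      · exact (hcol u v ⟨hc, hlt⟩).2 hp
      · exact fun h => (hcol v u ⟨hc.symm, hlt⟩).2 (h ▸ hp) h.symm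
    · rcases hne.lt_or_gt with hlt | hlt
      · exact (hrow u v ⟨hr, hlt⟩).2 hp
      · exact fun h => (hrow v u ⟨hr.symm, hlt⟩).2 (h ▸ hp) h.symm

variable {prm : Fin 2 → Bool} {T : {p // p ∈ C} → Fin 2}

theorem isSuperTab_iff_of_unprimed_primed (h0 : prm 0 = false) (h1 : prm 1 = true) :
    IsSuperTab C prm T ↔
      (∀ u v : {p // p ∈ C}, RowLT u.1 v.1 → T u = 0) ∧
        ∀ u v : {p // p ∈ C}, ColLT u.1 v.1 → T v = 1 := by
  rw [isSuperTab_iff_rowLT_colLT]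
  refine and_congr (forall₂_congr fun u v => imp_congr_right fun _ => ?_)
    (forall₂_congr fun u v => imp_congr_right fun _ => ?_) <;> grind

theorem isSuperTab_iff_of_primed_unprimed (h0 : prm 0 = true) (h1 : prm 1 = false) :
    IsSuperTab C prm T ↔
      (∀ u v : {p // p ∈ C}, ColLT u.1 v.1 → T u = 0) ∧
        ∀ u v : {p // p ∈ C}, RowLT u.1 v.1 → T v = 1 := by
  rw [isSuperTab_iff_rowLT_colLT, and_comm]
  refine and_congr (forall₂_congr fun u v => imp_congr_right fun _ => ?_)
    (forall₂_congr fun u v => imp_congr_right fun _ => ?_) <;> grind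

end SuperTableaux

section TwoColorings

variable {ι : Type*} [Fintype ι] [DecidableEq ι] {R₀ R₁ : ι → ι → Prop}

open Classical in
theorem card_forced_twoColorings_eq_two (hdisj : ∀ w u v, R₁ w u → ¬R₀ u v) (b : ι)
    (hfree : ∀ u, ((∀ v, ¬R₀ u v) ∧ ∀ w, ¬R₁ w u) ↔ u = b) :
    (Finset.univ.filter fun T : ι → Fin 2 =>
      (∀ u v, R₀ u v → T u = 0) ∧ ∀ u v, R₁ u v → T v = 1).card = 2 := by
  set extend : Fin 2 → ι → Fin 2 := fun k u =>
    if ∃ w, R₁ w u then 1 else if ∃ v, R₀ u v then 0 else k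
  have extend_free : ∀ k u, ((∀ v, ¬R₀ u v) ∧ ∀ w, ¬R₁ w u) → extend k u = k := by
    intro k u ⟨h₀, h₁⟩
    simp only [extend, not_exists.mpr h₀, not_exists.mpr h₁, if_false]
  refine (Finset.card_nbij' (t := Finset.univ) (fun T => T b) extend
    (fun _ _ => Finset.mem_univ _) ?_ ?_ ?_).trans (Finset.card_fin 2)
  · intro k _
    refine Finset.mem_filter.mpr ⟨Finset.mem_univ _, fun u v h => ?_, fun u v h => if_pos ⟨u, h⟩⟩
    have : ¬∃ w, R₁ w u := fun ⟨w, hw⟩ => hdisj w u v hw h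
    simp only [extend, this, if_false, if_pos (⟨v, h⟩ : ∃ v, R₀ u v)]
  · intro T hT
    obtain ⟨hT₀, hT₁⟩ := (Finset.mem_filter.mp hT).2
    funext u
    by_cases h₁ : ∃ w, R₁ w u
    · obtain ⟨w, hw⟩ := h₁
      simp only [extend, if_pos (⟨w, hw⟩ : ∃ w, R₁ w u), hT₁ w u hw]
    by_cases h₀ : ∃ v, R₀ u v
    · obtain ⟨v, hv⟩ := h₀
      simp only [extend, h₁, if_false, if_pos (⟨v, hv⟩ : ∃ v, R₀ u v), hT₀ u v hv]
    have hu : (∀ v, ¬R₀ u v) ∧ ∀ w, ¬R₁ w u := ⟨not_exists.mp h₀, not_exists.mp h₁⟩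
    obtain rfl := (hfree u).mp hu
    exact extend_free _ _ hu
  · intro k _
    exact extend_free k b ((hfree b).mpr rfl)

end TwoColorings

section RibbonCount

variable {C : Finset (ℕ × ℕ)} {prm : Fin 2 → Bool}

open Classical in
theorem card_superTab_of_unprimed_primed (hC : (C : Set (ℕ × ℕ)).OrdConnected)
    (h2 : NoTwoByTwo C) (hconn : ConnectedCells C) (hne : C.Nonempty)
    (h0 : prm 0 = false) (h1 : prm 1 = true) :
    (Finset.univ.filter fun T : {p // p ∈ C} → Fin 2 => IsSuperTab C prm T).card = 2 := by
  obtain ⟨b, hb, hmax⟩ := C.exists_max_image content hne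
  rw [Finset.filter_congr fun T _ => isSuperTab_iff_of_unprimed_primed h0 h1]
  refine card_forced_twoColorings_eq_two
    (fun w u v => not_rowLT_of_colLT hC h2 w.2 v.2) ⟨b, hb⟩ fun u => ?_
  simpa only [Subtype.forall, Subtype.ext_iff] using
    forall_not_rowLT_and_forall_not_colLT_iff_of_max hC h2 hconn hb hmax u.2

open Classical in
theorem card_superTab_of_primed_unprimed (hC : (C : Set (ℕ × ℕ)).OrdConnected)
    (h2 : NoTwoByTwo C) (hconn : ConnectedCells C) (hne : C.Nonempty)
    (h0 : prm 0 = true) (h1 : prm 1 = false) :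
    (Finset.univ.filter fun T : {p // p ∈ C} → Fin 2 => IsSuperTab C prm T).card = 2 := by
  obtain ⟨b, hb, hmin⟩ := C.exists_min_image content hne
  rw [Finset.filter_congr fun T _ => isSuperTab_iff_of_primed_unprimed h0 h1]
  refine card_forced_twoColorings_eq_two
    (fun w u v => not_colLT_of_rowLT hC h2 w.2 v.2) ⟨b, hb⟩ fun u => ?_
  simpa only [Subtype.forall, Subtype.ext_iff] using
    forall_not_colLT_and_forall_not_rowLT_iff_of_min hC h2 hconn hb hmin u.2

end RibbonCount

open Classical in
theorem ribbon_two_fillings_general (lam mu : List ℕ) (hlam : IsPartition lam) (hmu : IsPartition mu)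
    (hrib : IsRibbon (cells lam mu))
    (prm : Fin 2 → Bool) (hprm : prm 0 ≠ prm 1) :
    (Finset.univ.filter fun T : {p // p ∈ cells lam mu} → Fin 2 =>
      IsSuperTab (cells lam mu) prm T).card = 2 := by
  obtain ⟨hne, hconn, h2⟩ := hrib
  have hC := ordConnected_cells hlam.1 hmu.1
  cases h0 : prm 0
  · exact card_superTab_of_unprimed_primed hC h2 hconn hne h0 (by grind)
  · exact card_superTab_of_primed_unprimed hC h2 hconn hne h0 (by grind)

open Classical in
/-- **Two-filling enumeration for ribbons**: if `θ = F^{λ/μ}` is a nonempty ribbon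
(edgewise connected with no 2×2 block of boxes) and `R′` is a marked alphabet on
`{1,2}` with exactly one unprimed and one primed letter (in either order), then
there are exactly two skew supertableaux of shape `θ` over `R′`. -/
theorem ribbon_two_fillings (lam mu : List ℕ) (hlam : IsPartition lam) (hmu : IsPartition mu)
    (hsub : Contained mu lam) (hrib : IsRibbon (cells lam mu))
    (prm : Fin 2 → Bool) (hprm : prm 0 ≠ prm 1) :
    (Finset.univ.filter fun T : {p // p ∈ cells lam mu} → Fin 2 =>
      IsSuperTab (cells lam mu) prm T).card = 2 :=
  ribbon_two_fillings_general lam mu hlam hmu hrib prm hprm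

end SuperSchur
end

section
/- Ribbon cancellation lemma (key step in the proof of Proposition 4.3(iv)): let θ be a nonempty ribbon and let R′ be a marked alphabet on R = {1,2} with exactly one unprimed letter carrying the variable x and one primed letter carrying the variable y (in either order). Then for every doubly infinite family a = (a_t)_{t∈ℤ} in a commutative ring A and every t ∈ A, the substitution x = t, y = −t makes the factorial weight sum Σ_{T∈𝒯^{θ}_{R′}} ∏_{(i,j)∈θ} wgt(t_{ij}) equal to 0; equivalently, this sum, as a polynomial in x and y over A, is divisible by (x + y). -/
namespace SuperSchur

variable {A : Type*} [CommRing A]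

/-!
Flip the entry of one corner cell `u₀` to the other letter. If the unprimed letter comes first,
take `u₀` of maximal content: the rest of its row lies to its left and the rest of its column
below it, so in every supertableau these cells carry the unprimed and the primed letter
respectively, and the entry of `u₀` may be either letter. If the primed letter comes first, take
`u₀` of minimal content instead. The flip is an involution on supertableaux, and since
`σ(1) = σ(2)` the two possible weights of `u₀`, `t + a (σ + c)` and `-t - a (σ + c)`, are
opposite, so the terms cancel in pairs.
-/

section Compatibility

variable {NA : ℕ} {prm : Fin NA → Bool} {u v : ℕ × ℕ} {r s : Fin NA}

def SuperCompat (prm : Fin NA → Bool) (u v : ℕ × ℕ) (r s : Fin NA) : Prop :=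
  (u.1 = v.1 → u.2 ≤ v.2 → r ≤ s) ∧ (u.2 = v.2 → u.1 ≤ v.1 → r ≤ s) ∧
  (u.2 = v.2 → u.1 ≠ v.1 → prm r = false → r ≠ s) ∧
  (u.1 = v.1 → u.2 ≠ v.2 → prm r = true → r ≠ s)

theorem isSuperTab_iff_forall_superCompat {C : Finset (ℕ × ℕ)} {T : {p // p ∈ C} → Fin NA} :
    IsSuperTab C prm T ↔ ∀ u v, SuperCompat prm u.1 v.1 (T u) (T v) := by
  simp only [IsSuperTab, SuperCompat, forall_and]

theorem superCompat_self (prm : Fin NA → Bool) (u : ℕ × ℕ) (r : Fin NA) :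
    SuperCompat prm u u r r :=
  ⟨fun _ _ => le_rfl, fun _ _ => le_rfl, fun _ h => absurd rfl h, fun _ h => absurd rfl h⟩

theorem superCompat_of_ne_of_ne (h₁ : u.1 ≠ v.1) (h₂ : u.2 ≠ v.2) : SuperCompat prm u v r s :=
  ⟨fun h => absurd h h₁, fun h => absurd h h₂, fun h => absurd h h₂, fun h => absurd h h₁⟩

theorem superCompat_iff_of_row_lt (h : u.1 = v.1) (hlt : u.2 < v.2) :
    SuperCompat prm u v r s ↔ r ≤ s ∧ (prm r = true → r ≠ s) := by
  simp [SuperCompat, h, hlt.le, hlt.ne]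

theorem superCompat_iff_of_row_gt (h : u.1 = v.1) (hgt : v.2 < u.2) :
    SuperCompat prm u v r s ↔ (prm r = true → r ≠ s) := by
  simp [SuperCompat, h, hgt.not_ge, hgt.ne']

theorem superCompat_iff_of_col_lt (h : u.2 = v.2) (hlt : u.1 < v.1) :
    SuperCompat prm u v r s ↔ r ≤ s ∧ (prm r = false → r ≠ s) := by
  simp [SuperCompat, h, hlt.le, hlt.ne]

theorem superCompat_iff_of_col_gt (h : u.2 = v.2) (hgt : v.1 < u.1) :
    SuperCompat prm u v r s ↔ (prm r = false → r ≠ s) := by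
  simp [SuperCompat, h, hgt.not_ge, hgt.ne']

def Unconstrained (prm : Fin NA → Bool) (u v : ℕ × ℕ) : Prop :=
  ∀ r s t : Fin NA, SuperCompat prm u v s t → SuperCompat prm v u t s →
    SuperCompat prm u v r t ∧ SuperCompat prm v u t r

theorem unconstrained_of_ne_of_ne (h₁ : u.1 ≠ v.1) (h₂ : u.2 ≠ v.2) : Unconstrained prm u v :=
  fun _ _ _ _ _ =>
    ⟨superCompat_of_ne_of_ne h₁ h₂, superCompat_of_ne_of_ne (Ne.symm h₁) (Ne.symm h₂)⟩

theorem IsSuperTab.update_of_unconstrained {C : Finset (ℕ × ℕ)} {T : {p // p ∈ C} → Fin NA}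
    (hT : IsSuperTab C prm T) (u₀ : {p // p ∈ C})
    (hfree : ∀ v, v ≠ u₀ → Unconstrained prm u₀.1 v.1) (r : Fin NA) :
    IsSuperTab C prm (Function.update T u₀ r) := by
  rw [isSuperTab_iff_forall_superCompat] at hT ⊢
  intro u v
  by_cases hu : u = u₀ <;> by_cases hv : v = u₀
  · subst hu hv; simpa using superCompat_self prm _ r
  · subst hu
    simpa [Function.update_of_ne hv] using (hfree v hv r _ _ (hT u v) (hT v u)).1
  · subst hv
    simpa [Function.update_of_ne hu] using (hfree u hu r _ _ (hT v u) (hT u v)).2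
  · simpa [Function.update_of_ne hu, Function.update_of_ne hv] using hT u v

end Compatibility

theorem tabSum_eq_zero_of_flip {NA : ℕ} {C : Finset (ℕ × ℕ)} {prm : Fin NA → Bool}
    {w : Fin NA → ℤ → A} (τ : Fin NA → Fin NA) (hτ : Function.Involutive τ)
    (hτ_ne : ∀ r, τ r ≠ r) (hw : ∀ r c, w r c + w (τ r) c = 0) (u₀ : {p // p ∈ C})
    (hflip : ∀ T, IsSuperTab C prm T → IsSuperTab C prm (Function.update T u₀ (τ (T u₀)))) :
    tabSum C prm w = 0 := by
  classical
  refine Finset.sum_involution (fun T _ => Function.update T u₀ (τ (T u₀))) ?_ ?_ ?_ ?_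
  · intro T _
    have hrest : ∀ u ∈ ({u₀}ᶜ : Finset _),
        w (Function.update T u₀ (τ (T u₀)) u) (content u.1) = w (T u) (content u.1) :=
      fun u hu => by rw [Function.update_of_ne (by simpa using hu)]
    rw [Fintype.prod_eq_mul_prod_compl u₀, Fintype.prod_eq_mul_prod_compl u₀,
      Finset.prod_congr rfl hrest, Function.update_self, ← add_mul, hw, zero_mul]
  · intro T _ _ h
    exact hτ_ne (T u₀) (by simpa using congrFun h u₀)
  · intro T hT
    simp only [Finset.mem_filter, Finset.mem_univ, true_and] at hT ⊢
    exact hflip T hT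
  · intro T _
    simp [hτ (T u₀)]

section TwoLetters

variable {prm : Fin (1 + 1) → Bool}

theorem sigma_rev (hprm : prm 0 ≠ prm 1) (r : Fin (1 + 1)) : sigma prm r.rev = sigma prm r := by
  revert prm r; decide

theorem idx_eq_one (hprm : prm 0 ≠ prm 1) (r : Fin (1 + 1)) : idx prm r = 1 := by
  revert prm r; decide

theorem apply_rev_eq_not (hprm : prm 0 ≠ prm 1) (r : Fin (1 + 1)) : prm r.rev = !prm r := by
  revert prm r; decide

theorem wFact_add_wFact_rev (hprm : prm 0 ≠ prm 1) (t : A) (a : ℤ → A) (r : Fin (1 + 1))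
    (c : ℤ) :
    wFact prm (fun _ : Fin 1 => t) (fun _ : Fin 1 => -t) a r c +
      wFact prm (fun _ : Fin 1 => t) (fun _ : Fin 1 => -t) a r.rev c = 0 := by
  cases h : prm r <;> simp [wFact, h, apply_rev_eq_not hprm, idx_eq_one hprm, sigma_rev hprm]

variable {u v : ℕ × ℕ}

theorem unconstrained_of_content_le (hne : v ≠ u) (hc : content v ≤ content u) :
    Unconstrained ![false, true] u v := by
  simp only [content, ne_eq, Prod.ext_iff, not_and_or] at hc hne
  by_cases hrow : v.1 = u.1
  · have hleft : v.2 < u.2 := by omega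
    simp only [Unconstrained, superCompat_iff_of_row_gt hrow.symm hleft,
      superCompat_iff_of_row_lt hrow hleft]
    decide
  by_cases hcol : v.2 = u.2
  · have hbelow : u.1 < v.1 := by omega
    simp only [Unconstrained, superCompat_iff_of_col_lt hcol.symm hbelow,
      superCompat_iff_of_col_gt hcol hbelow]
    decide
  exact unconstrained_of_ne_of_ne (Ne.symm hrow) (Ne.symm hcol)

theorem unconstrained_of_le_content (hne : v ≠ u) (hc : content u ≤ content v) :
    Unconstrained ![true, false] u v := by
  simp only [content, ne_eq, Prod.ext_iff, not_and_or] at hc hne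
  by_cases hrow : v.1 = u.1
  · have hright : u.2 < v.2 := by omega
    simp only [Unconstrained, superCompat_iff_of_row_lt hrow.symm hright,
      superCompat_iff_of_row_gt hrow hright]
    decide
  by_cases hcol : v.2 = u.2
  · have habove : v.1 < u.1 := by omega
    simp only [Unconstrained, superCompat_iff_of_col_gt hcol.symm habove,
      superCompat_iff_of_col_lt hcol habove]
    decide
  exact unconstrained_of_ne_of_ne (Ne.symm hrow) (Ne.symm hcol)

theorem exists_forall_isSuperTab_update {C : Finset (ℕ × ℕ)} (hC : C.Nonempty)
    (hprm : prm 0 ≠ prm 1) :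
    ∃ u₀ : {p // p ∈ C}, ∀ T, IsSuperTab C prm T → ∀ r,
      IsSuperTab C prm (Function.update T u₀ r) := by
  have hvec : prm = ![prm 0, !prm 0] := by
    funext i; fin_cases i
    · rfl
    · simpa using (Bool.eq_not_of_ne hprm.symm)
  cases h0 : prm 0 <;> rw [h0] at hvec <;> subst hvec
  · obtain ⟨u, hu, hmax⟩ := C.exists_max_image content hC
    exact ⟨⟨u, hu⟩, fun T hT => hT.update_of_unconstrained _ fun v hv =>
      unconstrained_of_content_le (fun h => hv (Subtype.ext h)) (hmax v.1 v.2)⟩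
  · obtain ⟨u, hu, hmin⟩ := C.exists_min_image content hC
    exact ⟨⟨u, hu⟩, fun T hT => hT.update_of_unconstrained _ fun v hv =>
      unconstrained_of_le_content (fun h => hv (Subtype.ext h)) (hmin v.1 v.2)⟩

end TwoLetters

theorem ribbon_cancellation_general (lam mu : List ℕ) (hrib : IsRibbon (cells lam mu))
    (prm : Fin (1 + 1) → Bool) (hprm : prm 0 ≠ prm 1) (a : ℤ → A) (t : A) :
    tabSum (cells lam mu) prm
      (wFact prm (fun _ : Fin 1 => t) (fun _ : Fin 1 => -t) a) = 0 := by
  obtain ⟨u₀, hflip⟩ := exists_forall_isSuperTab_update hrib.1 hprm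
  exact tabSum_eq_zero_of_flip Fin.rev Fin.rev_involutive (by decide)
    (wFact_add_wFact_rev hprm t a) u₀ fun T hT => hflip T hT _

/-- **Ribbon cancellation lemma** (key step in the proof of Proposition 4.3(iv)):
if `θ = F^{λ/μ}` is a nonempty ribbon and `R′` is a marked alphabet on `{1,2}` with
exactly one unprimed letter carrying the variable `x` and one primed letter carrying
the variable `y` (in either order), then for every doubly infinite family `a` and every
`t`, the substitution `x = t`, `y = -t` makes the factorial weight sum vanish. -/
theorem ribbon_cancellation (lam mu : List ℕ) (hlam : IsPartition lam) (hmu : IsPartition mu)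
    (hsub : Contained mu lam) (hrib : IsRibbon (cells lam mu))
    (prm : Fin (1 + 1) → Bool) (hprm : prm 0 ≠ prm 1) (a : ℤ → A) (t : A) :
    tabSum (cells lam mu) prm
      (wFact prm (fun _ : Fin 1 => t) (fun _ : Fin 1 => -t) a) = 0 :=
  ribbon_cancellation_general lam mu hrib prm hprm a t

end SuperSchur
end
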